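/- Let ≿ be an uncertainty averse variational preference on 𝓕 represented by f ↦ min_{p∈Δ}(∫ u(f) dp + c₀(p)), where u : X → ℝ is nonconstant affine with 0 in the interior of u(X) and c₀ ∈ 𝒞 is grounded (min_{p∈Δ} c₀(p) = 0). Then its maximal grounded subset B* of 𝒞 satisfies B* = {b ∈ 𝒞 : there exists ĉ ∈ 𝒞 with ĉ ≈_u c₀ and min_{p∈Δ}[b(p) + ĉ(p)] ≤ 0}. -/

import Mathlib

open scoped Pointwise
open MeasureTheory

namespace Paper

variable {S V : Type*}

/-- An algebra of subsets of `S` (the events `Σ`). -/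
structure IsSetAlg (𝓐 : Set (Set S)) : Prop where
  empty_mem : ∅ ∈ 𝓐
  compl_mem : ∀ A ∈ 𝓐, Aᶜ ∈ 𝓐
  union_mem : ∀ A ∈ 𝓐, ∀ B ∈ 𝓐, A ∪ B ∈ 𝓐

/-- `B₀(Σ)`: real-valued `Σ`-measurable simple functions. -/
def IsSimpleFn (𝓐 : Set (Set S)) (φ : S → ℝ) : Prop :=
  (Set.range φ).Finite ∧ ∀ t : ℝ, φ ⁻¹' {t} ∈ 𝓐

open Classical in
/-- The integral of a simple function with respect to a finitely additive set function. -/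
noncomputable def fint (p : Set S → ℝ) (φ : S → ℝ) : ℝ :=
  if h : (Set.range φ).Finite then ∑ t ∈ h.toFinset, t * p (φ ⁻¹' {t}) else 0

/-- `Δ`: the finitely additive probabilities on `Σ` (canonically extended by `0` off `Σ`). -/
def Δset (𝓐 : Set (Set S)) : Set (Set S → ℝ) :=
  {p | p Set.univ = 1 ∧ (∀ A ∈ 𝓐, 0 ≤ p A) ∧
    (∀ A ∈ 𝓐, ∀ B ∈ 𝓐, Disjoint A B → p (A ∪ B) = p A + p B) ∧
    ∀ A : Set S, A ∉ 𝓐 → p A = 0}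

/-- The weak* topology `σ(Δ, B₀(Σ))`, i.e. the topology induced by the evaluation maps
`p ↦ ∫ φ dp`, `φ ∈ B₀(Σ)`. -/
noncomputable def weakStar (𝓐 : Set (Set S)) : TopologicalSpace (Set S → ℝ) :=
  TopologicalSpace.induced
    (fun p => fun φ : {φ : S → ℝ // IsSimpleFn 𝓐 φ} => fint p φ.1)
    Pi.topologicalSpace

/-- `𝒞`: the weak*-lower semicontinuous convex functions `c : Δ → (-∞, ∞]`. -/
def Cscr (𝓐 : Set (Set S)) : Set ((Set S → ℝ) → EReal) :=
  {c | (∀ p ∈ Δset 𝓐, ⊥ < c p) ∧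
    (@LowerSemicontinuousOn (Set S → ℝ) EReal (weakStar 𝓐) _ c (Δset 𝓐)) ∧
    ∀ p ∈ Δset 𝓐, ∀ q ∈ Δset 𝓐, ∀ a b : ℝ, 0 ≤ a → 0 ≤ b → a + b = 1 →
      c (a • p + b • q) ≤ (a : EReal) * c p + (b : EReal) * c q}

/-- A subset `C ⊆ 𝒞` is grounded if `sup_{c ∈ C} min_{p ∈ Δ} c p = 0`. -/
def Grounded (𝓐 : Set (Set S)) (C : Set ((Set S → ℝ) → EReal)) : Prop :=
  (⨆ c ∈ C, ⨅ p ∈ Δset 𝓐, c p) = 0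

/-- `min_{p ∈ Δ} (∫ φ dp + c p)`. -/
noncomputable def minVal (𝓐 : Set (Set S)) (c : (Set S → ℝ) → EReal) (φ : S → ℝ) : EReal :=
  ⨅ p ∈ Δset 𝓐, ((fint p φ : EReal) + c p)

/-- `max_{q ∈ Δ} (∫ φ dq - b q)`. -/
noncomputable def maxVal (𝓐 : Set (Set S)) (b : (Set S → ℝ) → EReal) (φ : S → ℝ) : EReal :=
  ⨆ q ∈ Δset 𝓐, ((fint q φ : EReal) - b q)

/-- `max_{c ∈ C} min_{p ∈ Δ} (∫ φ dp + c p)`. -/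
noncomputable def maxminVal (𝓐 : Set (Set S)) (C : Set ((Set S → ℝ) → EReal))
    (φ : S → ℝ) : EReal :=
  ⨆ c ∈ C, minVal 𝓐 c φ

/-- `min_{b ∈ B} max_{q ∈ Δ} (∫ φ dq - b q)`. -/
noncomputable def minmaxVal (𝓐 : Set (Set S)) (B : Set ((Set S → ℝ) → EReal))
    (φ : S → ℝ) : EReal :=
  ⨅ b ∈ B, maxVal 𝓐 b φ

/-- `min_{p ∈ P} ∫ φ dp`. -/
noncomputable def minPVal (P : Set (Set S → ℝ)) (φ : S → ℝ) : EReal :=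
  ⨅ p ∈ P, (fint p φ : EReal)

/-- `max_{q ∈ Q} ∫ φ dq`. -/
noncomputable def maxQVal (Q : Set (Set S → ℝ)) (φ : S → ℝ) : EReal :=
  ⨆ q ∈ Q, (fint q φ : EReal)

/-- `max_{P ∈ Pfam} min_{p ∈ P} ∫ φ dp`. -/
noncomputable def maxminPVal (Pfam : Set (Set (Set S → ℝ))) (φ : S → ℝ) : EReal :=
  ⨆ P ∈ Pfam, minPVal P φ

/-- `min_{Q ∈ Qfam} max_{q ∈ Q} ∫ φ dq`. -/
noncomputable def minmaxQVal (Qfam : Set (Set (Set S → ℝ))) (φ : S → ℝ) : EReal :=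
  ⨅ Q ∈ Qfam, maxQVal Q φ

open Classical in
/-- The convex-analytic indicator `δ_P` of a set `P`. -/
noncomputable def ind (P : Set (Set S → ℝ)) : (Set S → ℝ) → EReal :=
  fun p => if p ∈ P then (0 : EReal) else ⊤

variable [AddCommGroup V] [Module ℝ V]

/-- `𝓕`: the simple acts, i.e. `Σ`-measurable maps `f : S → X` with finitely many values. -/
def Acts (𝓐 : Set (Set S)) (X : Set V) : Set (S → V) :=
  {f | (∀ s, f s ∈ X) ∧ (Set.range f).Finite ∧ ∀ v : V, f ⁻¹' {v} ∈ 𝓐}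

/-- The constant act with value `x`. -/
def constAct (x : V) : S → V := fun _ : S => x

/-- The mixture `α f + (1 - α) g` of two acts, defined statewise. -/
def mix (α : ℝ) (f g : S → V) : S → V := fun s => α • f s + (1 - α) • g s

/-- The statewise utility `u ∘ f` of an act. -/
def uAct (u : V → ℝ) (f : S → V) : S → ℝ := fun s => u (f s)

/-- `u : X → ℝ` is nonconstant and affine on `X`. -/
def IsNonconstAffine (X : Set V) (u : V → ℝ) : Prop :=
  (∀ x ∈ X, ∀ y ∈ X, ∀ t ∈ Set.Icc (0 : ℝ) 1,
      u (t • x + (1 - t) • y) = t * u x + (1 - t) * u y) ∧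
  ∃ x ∈ X, ∃ y ∈ X, u x ≠ u y

/-- A niveloidal preference: Axioms A1 (weak order), A2 (monotonicity), A3 (Archimedean)
and A4 (weak C-independence). -/
structure NiveloidalPref (𝓐 : Set (Set S)) (X : Set V)
    (R : (S → V) → (S → V) → Prop) : Prop where
  nontrivial : ∃ f ∈ Acts 𝓐 X, ∃ g ∈ Acts 𝓐 X, R f g ∧ ¬ R g f
  complete : ∀ f ∈ Acts 𝓐 X, ∀ g ∈ Acts 𝓐 X, R f g ∨ R g f
  transitive : ∀ f ∈ Acts 𝓐 X, ∀ g ∈ Acts 𝓐 X, ∀ h ∈ Acts 𝓐 X, R f g → R g h → R f h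
  monotone : ∀ f ∈ Acts 𝓐 X, ∀ g ∈ Acts 𝓐 X,
    (∀ s : S, R (constAct (f s)) (constAct (g s))) → R f g
  archimedean : ∀ f ∈ Acts 𝓐 X, ∀ g ∈ Acts 𝓐 X, ∀ h ∈ Acts 𝓐 X,
    (R f g ∧ ¬ R g f) → (R g h ∧ ¬ R h g) →
    ∃ α ∈ Set.Ioo (0 : ℝ) 1, ∃ β ∈ Set.Ioo (0 : ℝ) 1,
      (R (mix α f h) g ∧ ¬ R g (mix α f h)) ∧
      (R g (mix β f h) ∧ ¬ R (mix β f h) g)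
  weakCIndep : ∀ f ∈ Acts 𝓐 X, ∀ g ∈ Acts 𝓐 X, ∀ x ∈ X, ∀ y ∈ X,
    ∀ α ∈ Set.Ioo (0 : ℝ) 1,
    R (mix α f (constAct x)) (mix α g (constAct x)) →
    R (mix α f (constAct y)) (mix α g (constAct y))

/-- An invariant biseparable preference: Axioms A1 (weak order), A2 (monotonicity),
A3 (Archimedean) and A7 (C-independence). -/
structure IBPref (𝓐 : Set (Set S)) (X : Set V)
    (R : (S → V) → (S → V) → Prop) : Prop where
  nontrivial : ∃ f ∈ Acts 𝓐 X, ∃ g ∈ Acts 𝓐 X, R f g ∧ ¬ R g f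
  complete : ∀ f ∈ Acts 𝓐 X, ∀ g ∈ Acts 𝓐 X, R f g ∨ R g f
  transitive : ∀ f ∈ Acts 𝓐 X, ∀ g ∈ Acts 𝓐 X, ∀ h ∈ Acts 𝓐 X, R f g → R g h → R f h
  monotone : ∀ f ∈ Acts 𝓐 X, ∀ g ∈ Acts 𝓐 X,
    (∀ s : S, R (constAct (f s)) (constAct (g s))) → R f g
  archimedean : ∀ f ∈ Acts 𝓐 X, ∀ g ∈ Acts 𝓐 X, ∀ h ∈ Acts 𝓐 X,
    (R f g ∧ ¬ R g f) → (R g h ∧ ¬ R h g) →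
    ∃ α ∈ Set.Ioo (0 : ℝ) 1, ∃ β ∈ Set.Ioo (0 : ℝ) 1,
      (R (mix α f h) g ∧ ¬ R g (mix α f h)) ∧
      (R g (mix β f h) ∧ ¬ R (mix β f h) g)
  cIndep : ∀ f ∈ Acts 𝓐 X, ∀ g ∈ Acts 𝓐 X, ∀ x ∈ X, ∀ α ∈ Set.Ioo (0 : ℝ) 1,
    (R f g ↔ R (mix α f (constAct x)) (mix α g (constAct x)))

/-- Axiom A5 (uncertainty aversion). -/
def UncertaintyAverse (𝓐 : Set (Set S)) (X : Set V)
    (R : (S → V) → (S → V) → Prop) : Prop :=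
  ∀ f ∈ Acts 𝓐 X, ∀ g ∈ Acts 𝓐 X, ∀ α ∈ Set.Ioo (0 : ℝ) 1,
    R f g → R g f → R (mix α f g) f

/-- `xf` assigns to every act a certainty equivalent. -/
def IsCE (𝓐 : Set (Set S)) (X : Set V) (R : (S → V) → (S → V) → Prop)
    (xf : (S → V) → V) : Prop :=
  ∀ f ∈ Acts 𝓐 X, xf f ∈ X ∧ R f (constAct (xf f)) ∧ R (constAct (xf f)) f

/-- `C*`: the maximal candidate set of penalty functions. -/
def CstarOf (𝓐 : Set (Set S)) (X : Set V) (u : V → ℝ) (xf : (S → V) → V) :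
    Set ((Set S → ℝ) → EReal) :=
  {c | c ∈ Cscr 𝓐 ∧ ∀ f ∈ Acts 𝓐 X, minVal 𝓐 c (uAct u f) ≤ (u (xf f) : EReal)}

/-- `B*`: the maximal candidate set of reward functions. -/
def BstarOf (𝓐 : Set (Set S)) (X : Set V) (u : V → ℝ) (xf : (S → V) → V) :
    Set ((Set S → ℝ) → EReal) :=
  {b | b ∈ Cscr 𝓐 ∧ ∀ f ∈ Acts 𝓐 X, (u (xf f) : EReal) ≤ maxVal 𝓐 b (uAct u f)}

/-- `Pfam*`: the maximal family of prior sets (maxmin form). -/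
def PstarOf (𝓐 : Set (Set S)) (X : Set V) (u : V → ℝ) (xf : (S → V) → V) :
    Set (Set (Set S → ℝ)) :=
  {P | P ⊆ Δset 𝓐 ∧ P.Nonempty ∧ Convex ℝ P ∧ (@IsCompact _ (weakStar 𝓐) P) ∧
    ∀ f ∈ Acts 𝓐 X, minPVal P (uAct u f) ≤ (u (xf f) : EReal)}

/-- `Qfam*`: the maximal family of prior sets (minmax form). -/
def QstarOf (𝓐 : Set (Set S)) (X : Set V) (u : V → ℝ) (xf : (S → V) → V) :
    Set (Set (Set S → ℝ)) :=
  {Q | Q ⊆ Δset 𝓐 ∧ Q.Nonempty ∧ Convex ℝ Q ∧ (@IsCompact _ (weakStar 𝓐) Q) ∧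
    ∀ f ∈ Acts 𝓐 X, (u (xf f) : EReal) ≤ maxQVal Q (uAct u f)}

/-- `C` yields the maxmin representation of `R` with utility `u`. -/
def MaxminRep (𝓐 : Set (Set S)) (X : Set V) (R : (S → V) → (S → V) → Prop)
    (u : V → ℝ) (C : Set ((Set S → ℝ) → EReal)) : Prop :=
  ∀ f ∈ Acts 𝓐 X, ∀ g ∈ Acts 𝓐 X,
    (R f g ↔ maxminVal 𝓐 C (uAct u g) ≤ maxminVal 𝓐 C (uAct u f))

/-- All indicated maxima over `C` and minima over `Δ` are attained. -/
def MaxminAttained (𝓐 : Set (Set S)) (X : Set V) (u : V → ℝ)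
    (C : Set ((Set S → ℝ) → EReal)) : Prop :=
  ∀ f ∈ Acts 𝓐 X,
    (∀ c ∈ C, ∃ p ∈ Δset 𝓐,
      minVal 𝓐 c (uAct u f) = (fint p (uAct u f) : EReal) + c p) ∧
    ∃ c ∈ C, maxminVal 𝓐 C (uAct u f) = minVal 𝓐 c (uAct u f)

/-- `B` yields the minmax representation of `R` with utility `u`. -/
def MinmaxRep (𝓐 : Set (Set S)) (X : Set V) (R : (S → V) → (S → V) → Prop)
    (u : V → ℝ) (B : Set ((Set S → ℝ) → EReal)) : Prop :=
  ∀ f ∈ Acts 𝓐 X, ∀ g ∈ Acts 𝓐 X,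
    (R f g ↔ minmaxVal 𝓐 B (uAct u g) ≤ minmaxVal 𝓐 B (uAct u f))

/-- All indicated minima over `B` and maxima over `Δ` are attained. -/
def MinmaxAttained (𝓐 : Set (Set S)) (X : Set V) (u : V → ℝ)
    (B : Set ((Set S → ℝ) → EReal)) : Prop :=
  ∀ f ∈ Acts 𝓐 X,
    (∀ b ∈ B, ∃ q ∈ Δset 𝓐,
      maxVal 𝓐 b (uAct u f) = (fint q (uAct u f) : EReal) - b q) ∧
    ∃ b ∈ B, minmaxVal 𝓐 B (uAct u f) = maxVal 𝓐 b (uAct u f)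

/-- A family of nonempty, convex, weak*-compact subsets of `Δ`. -/
def IsPriorFamily (𝓐 : Set (Set S)) (Pfam : Set (Set (Set S → ℝ))) : Prop :=
  Pfam.Nonempty ∧ ∀ P ∈ Pfam,
    P ⊆ Δset 𝓐 ∧ P.Nonempty ∧ Convex ℝ P ∧ (@IsCompact _ (weakStar 𝓐) P)

/-- `Pfam` yields the maxmin representation of `R` with utility `u`. -/
def PRep (𝓐 : Set (Set S)) (X : Set V) (R : (S → V) → (S → V) → Prop)
    (u : V → ℝ) (Pfam : Set (Set (Set S → ℝ))) : Prop :=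
  ∀ f ∈ Acts 𝓐 X, ∀ g ∈ Acts 𝓐 X,
    (R f g ↔ maxminPVal Pfam (uAct u g) ≤ maxminPVal Pfam (uAct u f))

/-- All indicated maxima over `Pfam` and minima over `P` are attained. -/
def PAttained (𝓐 : Set (Set S)) (X : Set V) (u : V → ℝ)
    (Pfam : Set (Set (Set S → ℝ))) : Prop :=
  ∀ f ∈ Acts 𝓐 X,
    (∀ P ∈ Pfam, ∃ p ∈ P, minPVal P (uAct u f) = (fint p (uAct u f) : EReal)) ∧
    ∃ P ∈ Pfam, maxminPVal Pfam (uAct u f) = minPVal P (uAct u f)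

/-- `Qfam` yields the minmax representation of `R` with utility `u`. -/
def QRep (𝓐 : Set (Set S)) (X : Set V) (R : (S → V) → (S → V) → Prop)
    (u : V → ℝ) (Qfam : Set (Set (Set S → ℝ))) : Prop :=
  ∀ f ∈ Acts 𝓐 X, ∀ g ∈ Acts 𝓐 X,
    (R f g ↔ minmaxQVal Qfam (uAct u g) ≤ minmaxQVal Qfam (uAct u f))

/-- All indicated minima over `Qfam` and maxima over `Q` are attained. -/
def QAttained (𝓐 : Set (Set S)) (X : Set V) (u : V → ℝ)
    (Qfam : Set (Set (Set S → ℝ))) : Prop :=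
  ∀ f ∈ Acts 𝓐 X,
    (∀ Q ∈ Qfam, ∃ q ∈ Q, maxQVal Q (uAct u f) = (fint q (uAct u f) : EReal)) ∧
    ∃ Q ∈ Qfam, minmaxQVal Qfam (uAct u f) = maxQVal Q (uAct u f)

/-- `c₁ ≈_u c₂`: `c₁` and `c₂` induce the same variational functional on `B₀(Σ, u(X))`. -/
def ApproxEq (𝓐 : Set (Set S)) (X : Set V) (u : V → ℝ)
    (c₁ c₂ : (Set S → ℝ) → EReal) : Prop :=
  ∀ φ : S → ℝ, IsSimpleFn 𝓐 φ → (∀ s, φ s ∈ u '' X) →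
    minVal 𝓐 c₁ φ = minVal 𝓐 c₂ φ

/-- `R₁` is more ambiguity averse than `R₂`. -/
def MoreAmbiguityAverse (𝓐 : Set (Set S)) (X : Set V)
    (R₁ R₂ : (S → V) → (S → V) → Prop) : Prop :=
  ∀ f ∈ Acts 𝓐 X, ∀ x ∈ X, R₂ (constAct x) f → R₁ (constAct x) f

/-- `u₁` and `u₂` are positive affine transformations of each other on `X`. -/
def CardEquiv (X : Set V) (u₁ u₂ : V → ℝ) : Prop :=
  ∃ a b : ℝ, 0 < a ∧ ∀ x ∈ X, u₂ x = a * u₁ x + b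

/-- A capacity on `(S, Σ)`. -/
def IsCapacity (𝓐 : Set (Set S)) (π : Set S → ℝ) : Prop :=
  π ∅ = 0 ∧ π Set.univ = 1 ∧ ∀ A ∈ 𝓐, ∀ B ∈ 𝓐, A ⊆ B → π A ≤ π B

/-- The Choquet integral of a (simple) function against a capacity. -/
noncomputable def choquet (π : Set S → ℝ) (φ : S → ℝ) : ℝ :=
  (∫ t in Set.Ioi (0 : ℝ), π {s | t ≤ φ s}) +
    ∫ t in Set.Iio (0 : ℝ), (π {s | t ≤ φ s} - 1)


/-!
Through the certainty equivalents, `u (x_f) = I (u ∘ f)` for the variational functional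
`I = minVal 𝓐 c₀`, so `b ∈ B*` says `I φ ≤ max_q (∫ φ dq - b q)` for all `φ ∈ B₀(Σ, u(X))`.
If some `ĉ ≈_u c₀` has `inf_p (b p + ĉ p) ≤ 0`, this is weak duality. Conversely, the conjugate
`ĉ p = sup_φ (I φ - ∫ φ dp)` is convex, weak*-lower semicontinuous and induces `I`, and
`inf_p (b p + ĉ p) ≤ 0` is a minimax inequality for `(p, φ) ↦ b p + I φ - ∫ φ dp`, which is
convex in `p` and concave in `φ`. For finitely many `φ` it follows from a separating hyperplane
in `ℝⁿ`, the hypothesis being tested on the mixture of the `φ` given by the normal vector; weak*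
compactness of `Δ` then handles all `φ` at once.
-/

theorem IsSetAlg.isSetAlgebra {𝓐 : Set (Set S)} (hA : IsSetAlg 𝓐) : IsSetAlgebra 𝓐 where
  empty_mem := hA.empty_mem
  compl_mem := fun A hA' => hA.compl_mem A hA'
  union_mem := fun A B hA' hB => hA.union_mem A hA' B hB

section FinitelyAdditive

variable {𝓐 : Set (Set S)} {p : Set S → ℝ}

theorem apply_empty_of_mem_Δset (hA : IsSetAlg 𝓐) (hp : p ∈ Δset 𝓐) : p ∅ = 0 := by
  have := hp.2.2.1 ∅ hA.empty_mem ∅ hA.empty_mem disjoint_bot_left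
  rw [Set.union_empty] at this
  linarith

theorem apply_mem_Icc_of_mem_Δset (hA : IsSetAlg 𝓐) (hp : p ∈ Δset 𝓐) (A : Set S) :
    p A ∈ Set.Icc (0 : ℝ) 1 := by
  by_cases hAm : A ∈ 𝓐
  · have hAc := hA.compl_mem A hAm
    have := hp.2.2.1 A hAm Aᶜ hAc disjoint_compl_right
    rw [Set.union_compl_self, hp.1] at this
    exact ⟨hp.2.1 A hAm, by linarith [hp.2.1 Aᶜ hAc]⟩
  · rw [hp.2.2.2 A hAm]
    exact ⟨le_rfl, zero_le_one⟩

theorem apply_biUnion_of_mem_Δset (hA : IsSetAlg 𝓐) (hp : p ∈ Δset 𝓐) {ι : Type*}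
    (t : Finset ι) {B : ι → Set S} (hB : ∀ i ∈ t, B i ∈ 𝓐)
    (hdisj : (t : Set ι).PairwiseDisjoint B) :
    p (⋃ i ∈ t, B i) = ∑ i ∈ t, p (B i) := by
  classical
  induction t using Finset.induction_on with
  | empty => simpa using apply_empty_of_mem_Δset hA hp
  | @insert a t ha ih =>
    rw [Finset.coe_insert, Set.pairwiseDisjoint_insert_of_notMem (by simpa using ha)] at hdisj
    have hBt : ∀ i ∈ t, B i ∈ 𝓐 := fun i hi => hB i (Finset.mem_insert_of_mem hi)
    rw [Finset.set_biUnion_insert, Finset.sum_insert ha,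
      hp.2.2.1 _ (hB a (Finset.mem_insert_self a t)) _ (hA.isSetAlgebra.biUnion_mem t hBt)
        (Set.disjoint_iUnion₂_right.2 hdisj.2), ih hBt hdisj.1]

theorem convex_Δset : Convex ℝ (Δset 𝓐) := by
  intro p hp q hq a b ha hb hab
  have happ : ∀ A : Set S, (a • p + b • q) A = a * p A + b * q A := fun A => rfl
  refine ⟨?_, fun A hAm => ?_, fun A hAm B hBm hd => ?_, fun A hAm => ?_⟩
  · rw [happ, hp.1, hq.1, mul_one, mul_one, hab]
  · rw [happ]
    exact add_nonneg (mul_nonneg ha (hp.2.1 A hAm)) (mul_nonneg hb (hq.2.1 A hAm))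
  · simp only [happ, hp.2.2.1 A hAm B hBm hd, hq.2.2.1 A hAm B hBm hd]
    ring
  · rw [happ, hp.2.2.2 A hAm, hq.2.2.2 A hAm, mul_zero, mul_zero, add_zero]

end FinitelyAdditive

/-- `IsSimpleFn` and `Acts` are the real- and `X`-valued instances of this notion. -/
def IsSimpleMap {α : Type*} (𝓐 : Set (Set S)) (f : S → α) : Prop :=
  (Set.range f).Finite ∧ ∀ a : α, f ⁻¹' {a} ∈ 𝓐

section SimpleMap

variable {𝓐 : Set (Set S)} {α β : Type*}

theorem isSimpleMap_const (hA : IsSetAlg 𝓐) (a : α) :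
    IsSimpleMap 𝓐 (fun _ : S => a) := by
  classical
  refine ⟨(Set.finite_singleton a).subset Set.range_const_subset, fun b => ?_⟩
  by_cases h : a = b
  · simpa [h] using hA.isSetAlgebra.univ_mem
  · simpa [h] using hA.empty_mem

theorem IsSimpleMap.comp (hA : IsSetAlg 𝓐) {f : S → α} (hf : IsSimpleMap 𝓐 f) (g : α → β) :
    IsSimpleMap 𝓐 (g ∘ f) := by
  classical
  refine ⟨Set.range_comp g f ▸ hf.1.image g, fun b => ?_⟩
  have : (g ∘ f) ⁻¹' {b} = ⋃ a ∈ hf.1.toFinset.filter (g · = b), f ⁻¹' {a} := by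
    ext s
    simp
  rw [this]
  exact hA.isSetAlgebra.biUnion_mem _ fun a _ => hf.2 a

theorem IsSimpleMap.prodMk (hA : IsSetAlg 𝓐) {f : S → α} {g : S → β} (hf : IsSimpleMap 𝓐 f)
    (hg : IsSimpleMap 𝓐 g) : IsSimpleMap 𝓐 (fun s => (f s, g s)) := by
  refine ⟨(hf.1.prod hg.1).subset ?_, fun ab => ?_⟩
  · rintro _ ⟨s, rfl⟩
    exact ⟨⟨s, rfl⟩, ⟨s, rfl⟩⟩
  · have : (fun s => (f s, g s)) ⁻¹' {ab} = f ⁻¹' {ab.1} ∩ g ⁻¹' {ab.2} := by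
      ext s
      simp [Prod.ext_iff]
    rw [this]
    exact hA.isSetAlgebra.inter_mem (hf.2 _) (hg.2 _)

end SimpleMap

section Integral

variable {𝓐 : Set (Set S)} {p : Set S → ℝ} {α : Type*}

theorem fint_comp (hA : IsSetAlg 𝓐) (hp : p ∈ Δset 𝓐) {f : S → α} (hf : IsSimpleMap 𝓐 f)
    (g : α → ℝ) : fint p (g ∘ f) = ∑ a ∈ hf.1.toFinset, g a * p (f ⁻¹' {a}) := by
  classical
  have hgf := hf.comp hA g
  have hfibre : ∀ t, p ((g ∘ f) ⁻¹' {t}) = ∑ a ∈ hf.1.toFinset with g a = t, p (f ⁻¹' {a}) := by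
    intro t
    rw [← apply_biUnion_of_mem_Δset hA hp _ (fun a _ => hf.2 a)]
    · congr 1
      ext s
      simp
    · intro a _ b _ hab
      exact Set.disjoint_left.2 fun s h1 h2 => hab (h1.symm.trans h2)
  rw [fint, dif_pos hgf.1]
  simp_rw [hfibre, Finset.mul_sum]
  rw [← Finset.sum_fiberwise_of_maps_to (g := g) (t := hgf.1.toFinset)
    (fun a ha => by
      obtain ⟨s, rfl⟩ := hf.1.mem_toFinset.1 ha
      exact hgf.1.mem_toFinset.2 ⟨s, rfl⟩)]
  refine Finset.sum_congr rfl fun t _ => Finset.sum_congr rfl fun a ha => ?_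
  rw [(Finset.mem_filter.1 ha).2]

theorem IsSimpleFn.smul_add_smul (hA : IsSetAlg 𝓐) {φ ψ : S → ℝ} (hφ : IsSimpleFn 𝓐 φ)
    (hψ : IsSimpleFn 𝓐 ψ) (a c : ℝ) : IsSimpleFn 𝓐 (a • φ + c • ψ) :=
  (IsSimpleMap.prodMk hA hφ hψ).comp hA fun x => a * x.1 + c * x.2

theorem fint_smul_add_smul_right (hA : IsSetAlg 𝓐) (hp : p ∈ Δset 𝓐) {φ ψ : S → ℝ}
    (hφ : IsSimpleFn 𝓐 φ) (hψ : IsSimpleFn 𝓐 ψ) (a c : ℝ) :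
    fint p (a • φ + c • ψ) = a * fint p φ + c * fint p ψ := by
  have hpair := IsSimpleMap.prodMk hA hφ hψ
  have hmix : fint p (a • φ + c • ψ) = _ := fint_comp hA hp hpair fun x => a * x.1 + c * x.2
  have hfst : fint p φ = _ := fint_comp hA hp hpair Prod.fst
  have hsnd : fint p ψ = _ := fint_comp hA hp hpair Prod.snd
  rw [hmix, hfst, hsnd, Finset.mul_sum, Finset.mul_sum, ← Finset.sum_add_distrib]
  exact Finset.sum_congr rfl fun x _ => by ring

theorem fint_smul_add_smul_left (p q : Set S → ℝ) (a c : ℝ) (φ : S → ℝ) :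
    fint (a • p + c • q) φ = a * fint p φ + c * fint q φ := by
  unfold fint
  split_ifs
  · simp only [Finset.mul_sum, ← Finset.sum_add_distrib, Pi.add_apply, Pi.smul_apply,
      smul_eq_mul]
    exact Finset.sum_congr rfl fun t _ => by ring
  · ring

theorem fint_const [Nonempty S] (hp : p ∈ Δset 𝓐) (k : ℝ) : fint p (fun _ : S => k) = k := by
  simp [fint, Set.range_const, hp.1]

theorem abs_fint_le (hA : IsSetAlg 𝓐) (hp : p ∈ Δset 𝓐) {φ : S → ℝ} (hφ : IsSimpleFn 𝓐 φ) :
    |fint p φ| ≤ ∑ t ∈ hφ.1.toFinset, |t| := by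
  rw [fint, dif_pos hφ.1]
  refine (Finset.abs_sum_le_sum_abs _ _).trans (Finset.sum_le_sum fun t _ => ?_)
  obtain ⟨h0, h1⟩ := apply_mem_Icc_of_mem_Δset hA hp (φ ⁻¹' {t})
  rw [abs_mul, abs_of_nonneg h0]
  exact mul_le_of_le_one_right (abs_nonneg t) h1

end Integral

/-- `B₀(Σ, T)`. -/
def simpleFnsIn (𝓐 : Set (Set S)) (T : Set ℝ) : Set (S → ℝ) :=
  {φ | IsSimpleFn 𝓐 φ ∧ ∀ s, φ s ∈ T}

theorem convex_simpleFnsIn {𝓐 : Set (Set S)} (hA : IsSetAlg 𝓐) {T : Set ℝ} (hT : Convex ℝ T) :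
    Convex ℝ (simpleFnsIn 𝓐 T) := fun _ hφ _ hψ a c ha hc hac =>
  ⟨hφ.1.smul_add_smul hA hψ.1 a c, fun s => hT (hφ.2 s) (hψ.2 s) ha hc hac⟩

section WeakStar

variable {𝓐 : Set (Set S)}

theorem continuous_fint_weakStar {φ : S → ℝ} (hφ : IsSimpleFn 𝓐 φ) :
    @Continuous _ _ (weakStar 𝓐) _ (fun p => fint p φ) := by
  let _ : TopologicalSpace (Set S → ℝ) := weakStar 𝓐
  have hev : Continuous fun p (ψ : {ψ : S → ℝ // IsSimpleFn 𝓐 ψ}) => fint p ψ.1 :=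
    continuous_induced_dom
  exact (continuous_apply ⟨φ, hφ⟩).comp hev

theorem continuous_fint (φ : S → ℝ) : Continuous fun p : Set S → ℝ => fint p φ := by
  by_cases h : (Set.range φ).Finite
  · simp only [fint, dif_pos h]
    exact continuous_finsetSum _ fun t _ => continuous_const.mul (continuous_apply _)
  · simp only [fint, dif_neg h]
    exact continuous_const

theorem isClosed_Δset : IsClosed (Δset 𝓐) := by
  have hunit : IsClosed {p : Set S → ℝ | p Set.univ = 1} :=
    isClosed_eq (continuous_apply _) continuous_const
  have hnonneg : IsClosed {p : Set S → ℝ | ∀ A ∈ 𝓐, 0 ≤ p A} := by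
    simp only [Set.ofPred_forall]
    exact isClosed_biInter fun A _ => isClosed_le continuous_const (continuous_apply A)
  have hadd : IsClosed {p : Set S → ℝ |
      ∀ A ∈ 𝓐, ∀ B ∈ 𝓐, Disjoint A B → p (A ∪ B) = p A + p B} := by
    simp only [Set.ofPred_forall]
    exact isClosed_biInter fun A _ => isClosed_biInter fun B _ => isClosed_iInter fun _ =>
      isClosed_eq (continuous_apply _) ((continuous_apply A).add (continuous_apply B))
  have hnull : IsClosed {p : Set S → ℝ | ∀ A : Set S, A ∉ 𝓐 → p A = 0} := by
    simp only [Set.ofPred_forall]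
    exact isClosed_iInter fun A => isClosed_iInter fun _ =>
      isClosed_eq (continuous_apply A) continuous_const
  exact hunit.inter (hnonneg.inter (hadd.inter hnull))

/-- Tychonoff, in the product topology, which is finer than the weak* topology. -/
theorem isCompact_Δset (hA : IsSetAlg 𝓐) : @IsCompact _ (weakStar 𝓐) (Δset 𝓐) := by
  have hcont : @Continuous _ _ _ (weakStar 𝓐) id :=
    continuous_induced_rng.2 (continuous_pi fun φ => continuous_fint φ.1)
  have hpi : IsCompact (Δset 𝓐) :=
    (isCompact_univ_pi fun _ => isCompact_Icc).of_isClosed_subset isClosed_Δset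
      fun p hp A _ => apply_mem_Icc_of_mem_Δset hA hp A
  simpa using @IsCompact.image _ _ _ (weakStar 𝓐) _ _ hpi hcont

end WeakStar

theorem EReal.le_of_forall_pos_le_add {x y : EReal} (h : ∀ δ : ℝ, 0 < δ → x ≤ y + δ) :
    x ≤ y := by
  refine EReal.le_of_forall_lt_iff_le.1 fun z hz => ?_
  induction y using EReal.rec with
  | bot =>
    have := h 1 one_pos
    rw [EReal.bot_add] at this
    exact this.trans bot_le
  | coe y =>
    have := h (z - y) (by exact_mod_cast sub_pos.2 (EReal.coe_lt_coe_iff.1 hz))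
    rwa [← EReal.coe_add, add_sub_cancel] at this
  | top => exact absurd hz (not_lt.2 le_top)

theorem EReal.exists_coe_of_add_lt_coe {x y : EReal} (hx : ⊥ < x) (hy : ⊥ < y) {δ : ℝ}
    (h : x + y < δ) : ∃ β γ : ℝ, x = β ∧ y = γ ∧ β + γ < δ := by
  induction x using EReal.rec <;> induction y using EReal.rec <;> simp_all
  exact_mod_cast h

section Grounded

variable {𝓐 : Set (Set S)} {b c : (Set S → ℝ) → EReal} {p : Set S → ℝ} {φ : S → ℝ}

theorem minVal_le (hp : p ∈ Δset 𝓐) : minVal 𝓐 c φ ≤ fint p φ + c p :=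
  iInf₂_le p hp

theorem le_maxVal (hp : p ∈ Δset 𝓐) : (fint p φ : EReal) - b p ≤ maxVal 𝓐 b φ :=
  le_iSup₂ (f := fun q _ => (fint q φ : EReal) - b q) p hp

theorem nonneg_of_iInf_eq_zero (hgr : (⨅ p ∈ Δset 𝓐, c p) = 0) (hp : p ∈ Δset 𝓐) :
    0 ≤ c p :=
  hgr ▸ iInf₂_le p hp

theorem exists_lt_of_iInf_eq_zero (hgr : (⨅ p ∈ Δset 𝓐, c p) = 0) {ε : ℝ} (hε : 0 < ε) :
    ∃ p ∈ Δset 𝓐, c p < ε := by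
  simpa only [iInf_lt_iff, exists_prop] using hgr.trans_lt (EReal.coe_pos.2 hε)

theorem minVal_const [Nonempty S] (hgr : (⨅ p ∈ Δset 𝓐, c p) = 0) (k : ℝ) :
    minVal 𝓐 c (fun _ => k) = k := by
  refine le_antisymm (EReal.le_of_forall_pos_le_add fun δ hδ => ?_) (le_iInf₂ fun p hp => ?_)
  · obtain ⟨q, hq, hlt⟩ := exists_lt_of_iInf_eq_zero hgr hδ
    calc minVal 𝓐 c (fun _ => k) ≤ fint q (fun _ => k) + c q := minVal_le hq
      _ ≤ k + δ := by rw [fint_const hq]; exact add_le_add_right hlt.le _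
  · rw [fint_const hp]
    exact le_add_of_nonneg_right (nonneg_of_iInf_eq_zero hgr hp)

theorem coe_toReal_minVal (hA : IsSetAlg 𝓐) (hgr : (⨅ p ∈ Δset 𝓐, c p) = 0)
    (hφ : IsSimpleFn 𝓐 φ) : ((minVal 𝓐 c φ).toReal : EReal) = minVal 𝓐 c φ := by
  set M := ∑ t ∈ hφ.1.toFinset, |t|
  obtain ⟨q, hq, hlt⟩ := exists_lt_of_iInf_eq_zero hgr one_pos
  have hupper : minVal 𝓐 c φ ≤ ((M + 1 : ℝ) : EReal) :=
    calc minVal 𝓐 c φ ≤ fint q φ + c q := minVal_le hq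
      _ ≤ M + (1 : ℝ) := add_le_add (by exact_mod_cast (abs_le.1 (abs_fint_le hA hq hφ)).2) hlt.le
  have hlower : ((-M : ℝ) : EReal) ≤ minVal 𝓐 c φ := le_iInf₂ fun p hp =>
    calc ((-M : ℝ) : EReal) ≤ fint p φ := by exact_mod_cast (abs_le.1 (abs_fint_le hA hp hφ)).1
      _ ≤ fint p φ + c p := le_add_of_nonneg_right (nonneg_of_iInf_eq_zero hgr hp)
  exact EReal.coe_toReal (ne_top_of_le_ne_top (EReal.coe_ne_top _) hupper)
    (ne_bot_of_le_ne_bot (EReal.coe_ne_bot _) hlower)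

theorem coe_toReal_minVal_sub_le (hA : IsSetAlg 𝓐) (hgr : (⨅ p ∈ Δset 𝓐, c p) = 0)
    (hφ : IsSimpleFn 𝓐 φ) (hp : p ∈ Δset 𝓐) :
    (((minVal 𝓐 c φ).toReal - fint p φ : ℝ) : EReal) ≤ c p := by
  have hle := minVal_le (c := c) (φ := φ) hp
  rw [← coe_toReal_minVal hA hgr hφ] at hle
  have hnonneg := nonneg_of_iInf_eq_zero hgr hp
  generalize c p = γ at hle hnonneg ⊢
  induction γ using EReal.rec with
  | bot => exact absurd hnonneg (by simp)
  | coe γ =>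
    norm_cast at hle ⊢
    linarith
  | top => exact le_top

theorem concaveOn_toReal_minVal (hA : IsSetAlg 𝓐) (hgr : (⨅ p ∈ Δset 𝓐, c p) = 0)
    {T : Set ℝ} (hT : Convex ℝ T) :
    ConcaveOn ℝ (simpleFnsIn 𝓐 T) fun φ => (minVal 𝓐 c φ).toReal := by
  refine ⟨convex_simpleFnsIn hA hT, fun φ hφ ψ hψ a b ha hb hab => ?_⟩
  have hmix := hφ.1.smul_add_smul hA hψ.1 a b
  rw [← EReal.coe_le_coe_iff, coe_toReal_minVal hA hgr hmix]
  refine le_iInf₂ fun p hp => ?_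
  have hφp := coe_toReal_minVal_sub_le hA hgr hφ.1 hp
  have hψp := coe_toReal_minVal_sub_le hA hgr hψ.1 hp
  rw [fint_smul_add_smul_right hA hp hφ.1 hψ.1]
  generalize c p = γ at hφp hψp ⊢
  induction γ using EReal.rec with
  | bot => exact absurd hφp (not_le.2 (EReal.bot_lt_coe _))
  | coe γ =>
    norm_cast at hφp hψp ⊢
    simp only [smul_eq_mul]
    have hγ : γ = a * γ + b * γ := by rw [← add_mul, hab, one_mul]
    nlinarith [mul_le_mul_of_nonneg_left hφp ha, mul_le_mul_of_nonneg_left hψp hb]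
  | top => exact le_top.trans_eq (EReal.coe_add_top _).symm

end Grounded

theorem exists_mem_stdSimplex_forall_lt_of_isUpperSet {ι : Type*} [Fintype ι]
    {O : Set (ι → ℝ)} (hOopen : IsOpen O) (hOconvex : Convex ℝ O) (hOup : IsUpperSet O)
    (hOne : O.Nonempty) {x : ι → ℝ} (hx : x ∉ O) :
    ∃ μ ∈ stdSimplex ℝ ι, ∀ y ∈ O, ∑ i, μ i * x i < ∑ i, μ i * y i := by
  classical
  obtain ⟨f, hf⟩ := geometric_hahn_banach_point_open hOconvex hOopen hx
  obtain ⟨y₀, hy₀⟩ := hOne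
  set e : ι → ι → ℝ := fun i j => if i = j then 1 else 0
  set w : ι → ℝ := fun i => f (e i)
  have hfw : ∀ y, f y = ∑ i, y i * w i := fun y =>
    LinearMap.pi_apply_eq_sum_univ f.toLinearMap y
  have hw : ∀ i, 0 ≤ w i := by
    intro i
    by_contra! hwi
    -- moving `y₀` up along the `i`-th axis stays in `O` but brings `f` down to `f x`
    set t := (f y₀ - f x) / -w i
    have ht : 0 ≤ t := div_nonneg (sub_nonneg.2 (hf _ hy₀).le) (neg_nonneg.2 hwi.le)
    have hmem : y₀ + t • e i ∈ O := hOup (le_add_of_nonneg_right fun j =>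
      mul_nonneg ht (by simp only [e]; split_ifs <;> norm_num)) hy₀
    have htw : t * w i = f x - f y₀ := by
      rw [div_mul_eq_mul_div, div_eq_iff (neg_ne_zero.2 hwi.ne)]
      ring
    have := hf _ hmem
    rw [map_add, map_smul, smul_eq_mul] at this
    linarith
  have hW : 0 < ∑ i, w i := by
    refine (Finset.sum_nonneg fun i _ => hw i).lt_of_ne fun hW => ?_
    have hw0 := (Finset.sum_eq_zero_iff_of_nonneg fun i _ => hw i).1 hW.symm
    have := hf _ hy₀
    simp [hfw, hw0] at this
  have hμ : ∀ z : ι → ℝ, ∑ i, (w i / ∑ j, w j) * z i = f z / ∑ j, w j := fun z => by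
    rw [hfw, Finset.sum_div]
    exact Finset.sum_congr rfl fun i _ => by ring
  refine ⟨fun i => w i / ∑ j, w j,
    ⟨fun i => div_nonneg (hw i) hW.le, by rw [← Finset.sum_div, div_self hW.ne']⟩,
    fun y hy => ?_⟩
  rw [hμ, hμ]
  exact div_lt_div_of_pos_right (hf y hy) hW

theorem exists_forall_lt_of_forall_mem_stdSimplex {E ι : Type*} [AddCommGroup E] [Module ℝ E]
    [Fintype ι] {D : Set E} (hD : D.Nonempty) {g : ι → E → ℝ} (hg : ∀ i, ConvexOn ℝ D (g i))
    {ε : ℝ} (h : ∀ μ ∈ stdSimplex ℝ ι, ∃ p ∈ D, ∑ i, μ i * g i p < ε) :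
    ∃ p ∈ D, ∀ i, g i p < ε := by
  obtain ⟨p₀, hp₀⟩ := hD
  rcases isEmpty_or_nonempty ι with hι | ⟨⟨i₀⟩⟩
  · exact ⟨p₀, hp₀, fun i => isEmptyElim i⟩
  by_contra! hcon
  set O : Set (ι → ℝ) := {y | ∃ p ∈ D, ∀ i, g i p < y i}
  have hOopen : IsOpen O := by
    have : O = ⋃ p ∈ D, ⋂ i, {y | g i p < y i} := by ext; simp [O]
    rw [this]
    exact isOpen_biUnion fun p _ => isOpen_iInter_of_finite fun i =>
      isOpen_lt continuous_const (continuous_apply i)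
  have hOconvex : Convex ℝ O := by
    rintro y₁ ⟨p₁, hp₁, hy₁⟩ y₂ ⟨p₂, hp₂, hy₂⟩ a c ha hc hac
    refine ⟨a • p₁ + c • p₂, (hg i₀).1 hp₁ hp₂ ha hc hac, fun i => ?_⟩
    refine ((hg i).2 hp₁ hp₂ ha hc hac).trans_lt ?_
    simp only [smul_eq_mul, Pi.add_apply, Pi.smul_apply]
    rcases ha.eq_or_lt with rfl | hapos
    · simpa [show c = 1 by linarith] using hy₂ i
    · exact add_lt_add_of_lt_of_le (mul_lt_mul_of_pos_left (hy₁ i) hapos)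
        (mul_le_mul_of_nonneg_left (hy₂ i).le hc)
  have hOup : IsUpperSet O := fun y z hyz ⟨p, hp, hlt⟩ => ⟨p, hp, fun i => (hlt i).trans_le (hyz i)⟩
  have hεO : (fun _ => ε) ∉ O := fun ⟨p, hp, hlt⟩ =>
    let ⟨i, hi⟩ := hcon p hp
    (hlt i).not_ge hi
  obtain ⟨μ, hμ, hsep⟩ := exists_mem_stdSimplex_forall_lt_of_isUpperSet hOopen hOconvex hOup
    ⟨_, p₀, hp₀, fun i => lt_add_one (g i p₀)⟩ hεO
  obtain ⟨p, hp, hlt⟩ := h μ hμ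
  have := hsep (fun i => g i p + (ε - ∑ i, μ i * g i p))
    ⟨p, hp, fun i => lt_add_of_pos_right _ (sub_pos.2 hlt)⟩
  simp only [mul_add, Finset.sum_add_distrib, ← Finset.sum_mul, hμ.2, one_mul] at this
  linarith

section Minimax

variable {𝓐 : Set (Set S)} {b c : (Set S → ℝ) → EReal} {T : Set ℝ} {p : Set S → ℝ}

theorem convexOn_toReal_of_mem_Cscr (hb : b ∈ Cscr 𝓐) :
    ConvexOn ℝ {p | p ∈ Δset 𝓐 ∧ b p ≠ ⊤} fun p => (b p).toReal := by
  have key : ∀ p ∈ Δset 𝓐, ∀ q ∈ Δset 𝓐, b p ≠ ⊤ → b q ≠ ⊤ → ∀ a c : ℝ, 0 ≤ a → 0 ≤ c →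
      a + c = 1 → b (a • p + c • q) ≤ ((a * (b p).toReal + c * (b q).toReal : ℝ) : EReal) := by
    intro p hp q hq hpt hqt a c ha hc hac
    have := hb.2.2 p hp q hq a c ha hc hac
    rwa [← EReal.coe_toReal hpt (hb.1 p hp).ne', ← EReal.coe_toReal hqt (hb.1 q hq).ne'] at this
  refine ⟨fun p ⟨hp, hpt⟩ q ⟨hq, hqt⟩ a c ha hc hac =>
    ⟨convex_Δset hp hq ha hc hac, ne_top_of_le_ne_top (EReal.coe_ne_top _)
      (key p hp q hq hpt hqt a c ha hc hac)⟩, fun p ⟨hp, hpt⟩ q ⟨hq, hqt⟩ a c ha hc hac => ?_⟩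
  have hmix := key p hp q hq hpt hqt a c ha hc hac
  exact EReal.toReal_le_toReal hmix (hb.1 _ (convex_Δset hp hq ha hc hac)).ne'
    (EReal.coe_ne_top _)

theorem convexOn_const_sub_fint {s : Set (Set S → ℝ)} (hs : Convex ℝ s) (k : ℝ) (φ : S → ℝ) :
    ConvexOn ℝ s fun p => k - fint p φ :=
  ⟨hs, fun p _ q _ a c _ _ hac => le_of_eq <| by
    change k - fint (a • p + c • q) φ = a * (k - fint p φ) + c * (k - fint q φ)
    rw [fint_smul_add_smul_left]
    linear_combination (-k) * hac⟩

theorem convexOn_fint_right (hA : IsSetAlg 𝓐) {p : Set S → ℝ} (hp : p ∈ Δset 𝓐)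
    (hT : Convex ℝ T) : ConvexOn ℝ (simpleFnsIn 𝓐 T) fun φ => fint p φ :=
  ⟨convex_simpleFnsIn hA hT, fun _ hφ _ hψ a c _ _ _ =>
    (fint_smul_add_smul_right hA hp hφ.1 hψ.1 a c).le⟩

theorem exists_toReal_add_lt_of_minVal_le_maxVal (hA : IsSetAlg 𝓐)
    (hgr : (⨅ p ∈ Δset 𝓐, c p) = 0) (hb : ∀ p ∈ Δset 𝓐, ⊥ < b p) {φ : S → ℝ}
    (hφ : IsSimpleFn 𝓐 φ) (H : minVal 𝓐 c φ ≤ maxVal 𝓐 b φ) {δ : ℝ} (hδ : 0 < δ) :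
    ∃ p ∈ Δset 𝓐, b p ≠ ⊤ ∧ (b p).toReal + ((minVal 𝓐 c φ).toReal - fint p φ) < δ := by
  have hlt : (((minVal 𝓐 c φ).toReal - δ : ℝ) : EReal) < maxVal 𝓐 b φ :=
    lt_of_lt_of_le (by rw [← coe_toReal_minVal hA hgr hφ]; exact_mod_cast sub_lt_self _ hδ) H
  obtain ⟨p, hp, hlt⟩ : ∃ p ∈ Δset 𝓐,
      (((minVal 𝓐 c φ).toReal - δ : ℝ) : EReal) < fint p φ - b p := by
    simpa only [maxVal, lt_iSup_iff, exists_prop] using hlt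
  have hbot := hb p hp
  refine ⟨p, hp, ?_⟩
  generalize b p = β at hlt hbot ⊢
  induction β using EReal.rec with
  | bot => exact absurd hbot (lt_irrefl _)
  | coe β =>
    norm_cast at hlt
    exact ⟨EReal.coe_ne_top β, by rw [EReal.toReal_coe]; linarith⟩
  | top => simp at hlt

theorem exists_forall_toReal_add_lt (hA : IsSetAlg 𝓐) (hgr : (⨅ p ∈ Δset 𝓐, c p) = 0)
    (hb : b ∈ Cscr 𝓐) (hT : Convex ℝ T) (hTne : T.Nonempty)
    (H : ∀ φ ∈ simpleFnsIn 𝓐 T, minVal 𝓐 c φ ≤ maxVal 𝓐 b φ) {δ : ℝ} (hδ : 0 < δ)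
    {ι : Type*} [Fintype ι] (φ : ι → S → ℝ) (hφ : ∀ i, φ i ∈ simpleFnsIn 𝓐 T) :
    ∃ p ∈ Δset 𝓐, b p ≠ ⊤ ∧
      ∀ i, (b p).toReal + ((minVal 𝓐 c (φ i)).toReal - fint p (φ i)) < δ := by
  obtain ⟨t, ht⟩ := hTne
  have hD : {p | p ∈ Δset 𝓐 ∧ b p ≠ ⊤}.Nonempty := by
    obtain ⟨p, hp, hpt, -⟩ := exists_toReal_add_lt_of_minVal_le_maxVal hA hgr hb.1
      (isSimpleMap_const hA t) (H _ ⟨isSimpleMap_const hA t, fun _ => ht⟩) one_pos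
    exact ⟨p, hp, hpt⟩
  have hg : ∀ i, ConvexOn ℝ {p | p ∈ Δset 𝓐 ∧ b p ≠ ⊤}
      fun p => (b p).toReal + ((minVal 𝓐 c (φ i)).toReal - fint p (φ i)) := fun i =>
    (convexOn_toReal_of_mem_Cscr hb).add
      (convexOn_const_sub_fint (convexOn_toReal_of_mem_Cscr hb).1 _ _)
  obtain ⟨p, ⟨hp, hpt⟩, hlt⟩ := exists_forall_lt_of_forall_mem_stdSimplex hD hg fun μ hμ => by
    -- test against the mixture `ψ = ∑ μᵢ φᵢ`, using concavity of `φ ↦ I(φ) - ∫ φ dp`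
    have hψ : ∑ i, μ i • φ i ∈ simpleFnsIn 𝓐 T :=
      (convex_simpleFnsIn hA hT).sum_mem (fun i _ => hμ.1 i) hμ.2 fun i _ => hφ i
    obtain ⟨p, hp, hpt, hlt⟩ := exists_toReal_add_lt_of_minVal_le_maxVal hA hgr hb.1 hψ.1
      (H _ hψ) hδ
    refine ⟨p, ⟨hp, hpt⟩, lt_of_le_of_lt ?_ hlt⟩
    have hjensen := ((concaveOn_toReal_minVal hA hgr hT).sub
      (convexOn_fint_right hA hp hT)).le_map_sum (fun i _ => hμ.1 i) hμ.2 fun i _ => hφ i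
    calc ∑ i, μ i * ((b p).toReal + ((minVal 𝓐 c (φ i)).toReal - fint p (φ i)))
        = (b p).toReal + ∑ i, μ i • ((minVal 𝓐 c (φ i)).toReal - fint p (φ i)) := by
          simp only [mul_add, Finset.sum_add_distrib, ← Finset.sum_mul, hμ.2, one_mul,
            smul_eq_mul]
      _ ≤ _ := (add_le_add_iff_left _).2 hjensen
  exact ⟨p, hp, hpt, hlt⟩

theorem exists_forall_toReal_add_le (hA : IsSetAlg 𝓐) (hgr : (⨅ p ∈ Δset 𝓐, c p) = 0)
    (hb : b ∈ Cscr 𝓐) (hT : Convex ℝ T) (hTne : T.Nonempty)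
    (H : ∀ φ ∈ simpleFnsIn 𝓐 T, minVal 𝓐 c φ ≤ maxVal 𝓐 b φ) {δ : ℝ} (hδ : 0 < δ) :
    ∃ p ∈ Δset 𝓐, b p ≠ ⊤ ∧ ∀ φ ∈ simpleFnsIn 𝓐 T,
      (b p).toReal + ((minVal 𝓐 c φ).toReal - fint p φ) ≤ δ := by
  let _ : TopologicalSpace (Set S → ℝ) := weakStar 𝓐
  set F : (S → ℝ) → (Set S → ℝ) → EReal :=
    fun φ p => b p + (((minVal 𝓐 c φ).toReal - fint p φ : ℝ) : EReal)
  have hF : ∀ φ ∈ simpleFnsIn 𝓐 T, LowerSemicontinuousOn (F φ) (Δset 𝓐) := by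
    intro φ hφ
    have hcont : Continuous fun p => (((minVal 𝓐 c φ).toReal - fint p φ : ℝ) : EReal) :=
      continuous_coe_real_ereal.comp (continuous_const.sub (continuous_fint_weakStar hφ.1))
    exact hb.2.1.add' (hcont.lowerSemicontinuous.lowerSemicontinuousOn _) fun p _ =>
      EReal.continuousAt_add (Or.inr (EReal.coe_ne_bot _)) (Or.inr (EReal.coe_ne_top _))
  -- compactness of `Δ` reduces the claim to finitely many test functions
  obtain ⟨p, hp, hle⟩ : (Δset 𝓐 ∩ ⋂ φ ∈ simpleFnsIn 𝓐 T, F φ ⁻¹' Set.Iic δ).Nonempty := by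
    rw [Set.nonempty_iff_ne_empty, Ne,
      LowerSemicontinuousOn.inter_biInter_preimage_Iic_eq_empty_iff_exists_finset
        (isCompact_Δset hA) hF]
    rintro ⟨u, hu⟩
    obtain ⟨p, hp, hpt, hlt⟩ := exists_forall_toReal_add_lt hA hgr hb hT hTne H hδ
      (fun φ : u => φ.1.1) fun φ => φ.1.2
    obtain ⟨φ, hφu, hφ⟩ := hu p hp
    have hFp : F φ p = (((b p).toReal + ((minVal 𝓐 c φ).toReal - fint p φ) : ℝ) : EReal) := by
      rw [EReal.coe_add, EReal.coe_toReal hpt (hb.1 p hp).ne']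
    refine hφ.not_ge ?_
    rw [hFp]
    exact_mod_cast (hlt ⟨φ, hφu⟩).le
  simp only [Set.mem_iInter, Set.mem_preimage, Set.mem_Iic, F] at hle
  obtain ⟨t, ht⟩ := hTne
  have hconst : (fun _ => t) ∈ simpleFnsIn 𝓐 T := ⟨isSimpleMap_const hA t, fun _ => ht⟩
  have hpt : b p ≠ ⊤ := fun htop => by
    have := hle _ hconst
    rw [htop, EReal.top_add_coe] at this
    exact (EReal.coe_lt_top δ).not_ge this
  refine ⟨p, hp, hpt, fun φ hφ => ?_⟩
  have := hle φ hφ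
  rwa [← EReal.coe_toReal hpt (hb.1 p hp).ne', ← EReal.coe_add, EReal.coe_le_coe_iff] at this

/-- The conjugate of `I = minVal 𝓐 c` on `B₀(Σ, T)`; taking `toReal` is harmless, as `I` is finite
on simple functions when `c` is grounded (`coe_toReal_minVal`). -/
noncomputable def minimalPenalty (𝓐 : Set (Set S)) (c : (Set S → ℝ) → EReal) (T : Set ℝ) :
    (Set S → ℝ) → EReal :=
  fun p => ⨆ φ ∈ simpleFnsIn 𝓐 T, (((minVal 𝓐 c φ).toReal - fint p φ : ℝ) : EReal)

theorem le_minimalPenalty {φ : S → ℝ} (hφ : φ ∈ simpleFnsIn 𝓐 T) :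
    (((minVal 𝓐 c φ).toReal - fint p φ : ℝ) : EReal) ≤ minimalPenalty 𝓐 c T p :=
  le_iSup₂ (f := fun φ _ => (((minVal 𝓐 c φ).toReal - fint p φ : ℝ) : EReal)) φ hφ

theorem minimalPenalty_le (hA : IsSetAlg 𝓐) (hgr : (⨅ p ∈ Δset 𝓐, c p) = 0)
    (hp : p ∈ Δset 𝓐) : minimalPenalty 𝓐 c T p ≤ c p :=
  iSup₂_le fun _ hφ => coe_toReal_minVal_sub_le hA hgr hφ.1 hp

theorem minimalPenalty_mem_Cscr (hA : IsSetAlg 𝓐) (hTne : T.Nonempty) :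
    minimalPenalty 𝓐 c T ∈ Cscr 𝓐 := by
  obtain ⟨t, ht⟩ := hTne
  refine ⟨fun p _ => (EReal.bot_lt_coe _).trans_le
    (le_minimalPenalty ⟨isSimpleMap_const hA t, fun _ => ht⟩), ?_, ?_⟩
  · let _ : TopologicalSpace (Set S → ℝ) := weakStar 𝓐
    exact lowerSemicontinuousOn_biSup fun φ hφ =>
      (continuous_coe_real_ereal.comp (continuous_const.sub
        (continuous_fint_weakStar hφ.1))).lowerSemicontinuous.lowerSemicontinuousOn _
  · intro p _ q _ s t hs ht hst
    refine iSup₂_le fun φ hφ => ?_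
    have hmix : (((minVal 𝓐 c φ).toReal - fint (s • p + t • q) φ : ℝ) : EReal) =
        s * (((minVal 𝓐 c φ).toReal - fint p φ : ℝ) : EReal) +
          t * (((minVal 𝓐 c φ).toReal - fint q φ : ℝ) : EReal) := by
      norm_cast
      rw [fint_smul_add_smul_left]
      linear_combination (-(minVal 𝓐 c φ).toReal) * hst
    rw [hmix]
    exact add_le_add (mul_le_mul_of_nonneg_left (le_minimalPenalty hφ) (EReal.coe_nonneg.2 hs))
      (mul_le_mul_of_nonneg_left (le_minimalPenalty hφ) (EReal.coe_nonneg.2 ht))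

theorem minVal_minimalPenalty (hA : IsSetAlg 𝓐) (hgr : (⨅ p ∈ Δset 𝓐, c p) = 0) {φ : S → ℝ}
    (hφ : φ ∈ simpleFnsIn 𝓐 T) : minVal 𝓐 (minimalPenalty 𝓐 c T) φ = minVal 𝓐 c φ := by
  refine le_antisymm (iInf₂_mono fun p hp => ?_) (le_iInf₂ fun p _ => ?_)
  · exact add_le_add_right (minimalPenalty_le hA hgr hp) _
  · rw [← coe_toReal_minVal hA hgr hφ.1]
    calc (((minVal 𝓐 c φ).toReal : ℝ) : EReal)
        = fint p φ + (((minVal 𝓐 c φ).toReal - fint p φ : ℝ) : EReal) := by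
          rw [← EReal.coe_add, add_sub_cancel]
      _ ≤ fint p φ + minimalPenalty 𝓐 c T p := add_le_add_right (le_minimalPenalty hφ) _

theorem iInf_add_minimalPenalty_le_zero (hA : IsSetAlg 𝓐) (hgr : (⨅ p ∈ Δset 𝓐, c p) = 0)
    (hb : b ∈ Cscr 𝓐) (hT : Convex ℝ T) (hTne : T.Nonempty)
    (H : ∀ φ ∈ simpleFnsIn 𝓐 T, minVal 𝓐 c φ ≤ maxVal 𝓐 b φ) :
    (⨅ p ∈ Δset 𝓐, (b p + minimalPenalty 𝓐 c T p)) ≤ 0 := by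
  refine EReal.le_of_forall_lt_iff_le.1 fun δ hδ => ?_
  obtain ⟨p, hp, hpt, hle⟩ :=
    exists_forall_toReal_add_le hA hgr hb hT hTne H (EReal.coe_pos.1 hδ)
  have hpen : minimalPenalty 𝓐 c T p ≤ ((δ - (b p).toReal : ℝ) : EReal) :=
    iSup₂_le fun φ hφ => EReal.coe_le_coe_iff.2 (by linarith [hle φ hφ])
  calc (⨅ p ∈ Δset 𝓐, (b p + minimalPenalty 𝓐 c T p)) ≤ b p + minimalPenalty 𝓐 c T p :=
        iInf₂_le p hp
    _ ≤ (b p).toReal + ((δ - (b p).toReal : ℝ) : EReal) := by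
        rw [EReal.coe_toReal hpt (hb.1 p hp).ne']
        exact add_le_add_right hpen _
    _ = δ := by rw [← EReal.coe_add, add_sub_cancel]

theorem minVal_le_maxVal_of_iInf_add_le_zero (hb : ∀ p ∈ Δset 𝓐, ⊥ < b p)
    (hc : ∀ p ∈ Δset 𝓐, ⊥ < c p)
    (h : (⨅ p ∈ Δset 𝓐, (b p + c p)) ≤ 0) (φ : S → ℝ) : minVal 𝓐 c φ ≤ maxVal 𝓐 b φ := by
  refine EReal.le_of_forall_pos_le_add fun δ hδ => ?_
  obtain ⟨p, hp, hlt⟩ : ∃ p ∈ Δset 𝓐, b p + c p < δ := by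
    simpa only [iInf_lt_iff, exists_prop] using h.trans_lt (EReal.coe_pos.2 hδ)
  obtain ⟨β, γ, hβ, hγ, hβγ⟩ := EReal.exists_coe_of_add_lt_coe (hb p hp) (hc p hp) hlt
  calc minVal 𝓐 c φ ≤ fint p φ + c p := minVal_le hp
    _ = ((fint p φ - β : ℝ) : EReal) + ((β + γ : ℝ) : EReal) := by
        rw [hγ, ← EReal.coe_add, ← EReal.coe_add]
        ring_nf
    _ ≤ maxVal 𝓐 b φ + δ := by
        refine add_le_add ?_ (EReal.coe_le_coe_iff.2 hβγ.le)
        simpa only [hβ, EReal.coe_sub] using le_maxVal (b := b) (φ := φ) hp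

end Minimax

section Acts

theorem IsNonconstAffine.convex_image {X : Set V} {u : V → ℝ} (hu : IsNonconstAffine X u)
    (hX : Convex ℝ X) : Convex ℝ (u '' X) := by
  rintro _ ⟨x, hx, rfl⟩ _ ⟨y, hy, rfl⟩ a c ha hc hac
  refine ⟨a • x + c • y, hX hx hy ha hc hac, ?_⟩
  obtain rfl : c = 1 - a := by linarith
  rw [hu.1 x hx y hy a ⟨ha, by linarith⟩, smul_eq_mul, smul_eq_mul]

variable {W : Type*} {𝓐 : Set (Set S)} {X : Set W} {u : W → ℝ}

theorem constAct_mem_Acts (hA : IsSetAlg 𝓐) {x : W} (hx : x ∈ X) : constAct x ∈ Acts 𝓐 X :=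
  ⟨fun _ => hx, isSimpleMap_const hA x⟩

theorem uAct_mem_simpleFnsIn (hA : IsSetAlg 𝓐) {f : S → W} (hf : f ∈ Acts 𝓐 X) :
    uAct u f ∈ simpleFnsIn 𝓐 (u '' X) :=
  ⟨IsSimpleMap.comp hA hf.2 u, fun s => ⟨f s, hf.1 s, rfl⟩⟩

theorem exists_mem_Acts_uAct_eq [Nonempty W] (hA : IsSetAlg 𝓐) {φ : S → ℝ}
    (hφ : φ ∈ simpleFnsIn 𝓐 (u '' X)) : ∃ f ∈ Acts 𝓐 X, uAct u f = φ :=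
  ⟨Function.invFunOn u X ∘ φ, ⟨fun s => Function.invFunOn_mem (hφ.2 s), IsSimpleMap.comp hA hφ.1 _⟩,
    funext fun s => Function.invFunOn_eq (hφ.2 s)⟩

theorem coe_u_eq_minVal_of_isCE [Nonempty S] (hA : IsSetAlg 𝓐)
    {c : (Set S → ℝ) → EReal} (hgr : (⨅ p ∈ Δset 𝓐, c p) = 0)
    {R : (S → W) → (S → W) → Prop}
    (hrep : ∀ f ∈ Acts 𝓐 X, ∀ g ∈ Acts 𝓐 X,
      (R f g ↔ minVal 𝓐 c (uAct u g) ≤ minVal 𝓐 c (uAct u f)))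
    {xf : (S → W) → W} (hxf : IsCE 𝓐 X R xf) {f : S → W} (hf : f ∈ Acts 𝓐 X) :
    (u (xf f) : EReal) = minVal 𝓐 c (uAct u f) := by
  obtain ⟨hxX, hfx, hxf⟩ := hxf f hf
  have hconst := constAct_mem_Acts hA hxX
  have hval : minVal 𝓐 c (uAct u (constAct (xf f))) = u (xf f) := minVal_const hgr (u (xf f))
  have hle := (hrep _ hconst f hf).1 hxf
  have hge := (hrep f hf _ hconst).1 hfx
  rw [hval] at hle hge
  exact le_antisymm hge hle

theorem bstarOf_eq_of_forall_coe_u_eq_minVal [Nonempty W] (hA : IsSetAlg 𝓐)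
    {c : (Set S → ℝ) → EReal}
    {xf : (S → W) → W} (hce : ∀ f ∈ Acts 𝓐 X, (u (xf f) : EReal) = minVal 𝓐 c (uAct u f)) :
    BstarOf 𝓐 X u xf =
      {b | b ∈ Cscr 𝓐 ∧ ∀ φ ∈ simpleFnsIn 𝓐 (u '' X), minVal 𝓐 c φ ≤ maxVal 𝓐 b φ} := by
  ext b
  refine and_congr_right fun _ => ⟨fun H φ hφ => ?_, fun H f hf => ?_⟩
  · obtain ⟨f, hf, rfl⟩ := exists_mem_Acts_uAct_eq hA hφ
    exact hce f hf ▸ H f hf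
  · exact (hce f hf).symm ▸ H _ (uAct_mem_simpleFnsIn hA hf)

end Acts

theorem stmt11_general {S V : Type*} [Nonempty S] [AddCommGroup V] [Module ℝ V]
    (𝓐 : Set (Set S)) (hA : IsSetAlg 𝓐)
    (X : Set V) (hX : X.Nonempty) (hXc : Convex ℝ X)
    (R : (S → V) → (S → V) → Prop)
    (u : V → ℝ) (hu : IsNonconstAffine X u)
    (c₀ : (Set S → ℝ) → EReal)
    (hgr : (⨅ p ∈ Δset 𝓐, c₀ p) = 0)
    (hrep : ∀ f ∈ Acts 𝓐 X, ∀ g ∈ Acts 𝓐 X,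
      (R f g ↔ minVal 𝓐 c₀ (uAct u g) ≤ minVal 𝓐 c₀ (uAct u f)))
    (xf : (S → V) → V) (hxf : IsCE 𝓐 X R xf) :
    BstarOf 𝓐 X u xf =
      {b | b ∈ Cscr 𝓐 ∧ ∃ ch ∈ Cscr 𝓐, ApproxEq 𝓐 X u ch c₀ ∧
        (⨅ p ∈ Δset 𝓐, (b p + ch p)) ≤ 0} := by
  have hT : Convex ℝ (u '' X) := hu.convex_image hXc
  have hTne : (u '' X).Nonempty := hX.image u
  rw [bstarOf_eq_of_forall_coe_u_eq_minVal hA fun f hf =>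
    coe_u_eq_minVal_of_isCE hA hgr hrep hxf hf]
  ext b
  constructor
  · rintro ⟨hb, H⟩
    exact ⟨hb, minimalPenalty 𝓐 c₀ (u '' X), minimalPenalty_mem_Cscr hA hTne,
      fun φ hs hv => minVal_minimalPenalty hA hgr ⟨hs, hv⟩,
      iInf_add_minimalPenalty_le_zero hA hgr hb hT hTne H⟩
  · rintro ⟨hb, ch, hch, happrox, hle⟩
    exact ⟨hb, fun φ hφ =>
      happrox φ hφ.1 hφ.2 ▸ minVal_le_maxVal_of_iInf_add_le_zero hb.1 hch.1 hle φ⟩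

theorem stmt11 {S V : Type*} [Nonempty S] [AddCommGroup V] [Module ℝ V]
    (𝓐 : Set (Set S)) (hA : IsSetAlg 𝓐)
    (X : Set V) (hX : X.Nonempty) (hXc : Convex ℝ X)
    (R : (S → V) → (S → V) → Prop) (hpref : NiveloidalPref 𝓐 X R)
    (hua : UncertaintyAverse 𝓐 X R)
    (u : V → ℝ) (hu : IsNonconstAffine X u) (h0 : (0 : ℝ) ∈ interior (u '' X))
    (c₀ : (Set S → ℝ) → EReal) (hc₀ : c₀ ∈ Cscr 𝓐)
    (hgr : (⨅ p ∈ Δset 𝓐, c₀ p) = 0)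
    (hrep : ∀ f ∈ Acts 𝓐 X, ∀ g ∈ Acts 𝓐 X,
      (R f g ↔ minVal 𝓐 c₀ (uAct u g) ≤ minVal 𝓐 c₀ (uAct u f)))
    (hatt : ∀ f ∈ Acts 𝓐 X, ∃ p ∈ Δset 𝓐,
      minVal 𝓐 c₀ (uAct u f) = (fint p (uAct u f) : EReal) + c₀ p)
    (xf : (S → V) → V) (hxf : IsCE 𝓐 X R xf) :
    BstarOf 𝓐 X u xf =
      {b | b ∈ Cscr 𝓐 ∧ ∃ ch ∈ Cscr 𝓐, ApproxEq 𝓐 X u ch c₀ ∧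
        (⨅ p ∈ Δset 𝓐, (b p + ch p)) ≤ 0} :=
  stmt11_general 𝓐 hA X hX hXc R u hu c₀ hgr hrep xf hxf

end Paper
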